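/- arXiv:1711.08729 — 5 statements merged into one kernel-verified Lean document; each statement's English description precedes it below -/
import Mathlib

section
/- Let n ≥ 1, let θ ∈ 𝕋, and let a, g be the unique coprime polynomials with g monic, deg a < deg g ≤ n/2 and |θ − a/g| < q^{−(n/2 + deg g)}. Set s = n − ⌊n/2⌋ − deg g. Then for any monic f₁, f₂ ∈ F_q[t] of degree n with f₁ ≡ f₂ mod R_{s,g}, one has e_q(f₁θ) = e_q(f₂θ). -/
/-!
Common setup: `F_q((1/t))` is realized as `LaurentSeries Fq` (formal Laurent series in `X`)
under the identification `X = 1/t`; thus the coefficient of `t^i` is the coefficient of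
`X^(-i)`, and `𝕋` consists of series supported on positive powers of `X`.
-/

open Polynomial
open scoped Classical

/-- The element `t` of `F_q((1/t))`, i.e. the Laurent series `X⁻¹`. -/
noncomputable def tElem (Fq : Type) [Field Fq] : LaurentSeries Fq :=
  HahnSeries.single (-1 : ℤ) 1

/-- The natural embedding of `F_q[t]` into `F_q((1/t))`: evaluate the polynomial at `t`. -/
noncomputable def toL {Fq : Type} [Field Fq] (f : Polynomial Fq) : LaurentSeries Fq :=
  Polynomial.aeval (tElem Fq) f

/-- The norm on `F_q((1/t))`: `|x| = q^j` where `j` is the largest index with `x_j ≠ 0`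
(in `t`-coefficients, so `j = -(order of the Hahn series)`), and `|0| = 0`. -/
noncomputable def nrm {Fq : Type} [Field Fq] [Fintype Fq] (x : LaurentSeries Fq) : ℝ :=
  if x = 0 then 0 else (Fintype.card Fq : ℝ) ^ (-(HahnSeries.order x))

/-- `𝕋 = {∑_{i<0} x_i t^i}`: Laurent series supported on negative powers of `t`. -/
def TT (Fq : Type) [Field Fq] : Set (LaurentSeries Fq) :=
  {x | ∀ n : ℤ, n ≤ 0 → x.coeff n = 0}

/-- The exponential `e_q(x) = ψ(x_{-1})`, where `ψ(y) = e^{2πi·tr(y)/p}` with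
`tr : F_q → F_p` the field trace, and `x_{-1}` is the coefficient of `t^{-1}` in `x`
(the coefficient of `X^1` of the Hahn series). -/
noncomputable def eQ {Fq : Type} [Field Fq] [Fintype Fq] (p : ℕ) [CharP Fq p]
    (x : LaurentSeries Fq) : ℂ :=
  letI := ZMod.algebra Fq p
  Complex.exp (2 * Real.pi * Complex.I *
    (((Algebra.trace (ZMod p) Fq (x.coeff 1)).val : ℂ) / (p : ℂ)))

/-- The Möbius function on `F_q[t]`: `μ(f) = (-1)^r` if `f` is a product of `r` distinct
irreducibles, and `μ(f) = 0` otherwise. -/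
noncomputable def mu {Fq : Type} [Field Fq] (f : Polynomial Fq) : ℤ :=
  if Squarefree f then
    (-1) ^ Multiset.card (UniqueFactorizationMonoid.normalizedFactors f)
  else 0

/-- The monic polynomial `X^n + ∑_{i<n} c_i X^i`; monic polynomials of degree `n`
are exactly the `stdPoly n c` for a unique `c : Fin n → Fq`. -/
noncomputable def stdPoly {Fq : Type} [Field Fq] (n : ℕ) (c : Fin n → Fq) : Polynomial Fq :=
  X ^ n + ∑ i : Fin n, C (c i) * X ^ (i : ℕ)

/-- The polynomial `∑_{i<k} c_i X^i` of degree `< k`. -/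
noncomputable def ltPoly {Fq : Type} [Field Fq] (k : ℕ) (c : Fin k → Fq) : Polynomial Fq :=
  ∑ i : Fin k, C (c i) * X ^ (i : ℕ)

/-- Hayes' relation `R_{s,g}` on monic polynomials:
`a ≡ b mod R_{s,g}` iff `g ∣ a - b` and `|a/t^{deg a} - b/t^{deg b}| < q^{-s}`.
(Here `1/t^{deg a}` is the Laurent series `X^{deg a}`.) -/
def Requiv {Fq : Type} [Field Fq] [Fintype Fq] (s : ℕ) (g a b : Polynomial Fq) : Prop :=
  g ∣ (a - b) ∧
  nrm (toL a * HahnSeries.single (a.natDegree : ℤ) 1 -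
        toL b * HahnSeries.single (b.natDegree : ℤ) 1)
    < (Fintype.card Fq : ℝ) ^ (-(s : ℤ))

/-- `φ(g)`: the number of invertible residue classes modulo `g`. -/
noncomputable def phi {Fq : Type} [Field Fq] (g : Polynomial Fq) : ℕ :=
  Nat.card ((Polynomial Fq ⧸ Ideal.span {g})ˣ)

/-- `χ` is (the extension by zero of) a character of the unit group `R*_{s,g}` of the quotient
monoid of monic polynomials modulo `R_{s,g}`: it vanishes off monic polynomials, it is
multiplicative on monic polynomials, it is constant on `R_{s,g}`-classes, and it vanishes at a
monic polynomial exactly when that polynomial is not coprime to `g`.  (Such functions correspond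
bijectively to the characters of the finite abelian group `R*_{s,g}`.) -/
def IsRChar {Fq : Type} [Field Fq] [Fintype Fq] (s : ℕ) (g : Polynomial Fq)
    (χ : Polynomial Fq → ℂ) : Prop :=
  (∀ f : Polynomial Fq, ¬ f.Monic → χ f = 0) ∧
  (∀ a b : Polynomial Fq, a.Monic → b.Monic → χ (a * b) = χ a * χ b) ∧
  (∀ a b : Polynomial Fq, a.Monic → b.Monic → Requiv s g a b → χ a = χ b) ∧
  (∀ f : Polynomial Fq, f.Monic → (χ f = 0 ↔ ¬ IsCoprime f g))

/-!
Write `f₁ - f₂ = g h`. Then `(f₁ - f₂) θ = h a + (f₁ - f₂)(θ - a/g)`. The polynomial `h a` has no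
`t⁻¹`-coefficient, and since norms are integral powers of `q`, the `R_{s,g}`-condition and the
approximation give `|f₁ - f₂| ≤ q^{n-s-1}` and `|θ - a/g| ≤ q^{-⌊n/2⌋-deg g-1}`, so the second
term has norm at most `q^{-2}` and no `t⁻¹`-coefficient either.
-/

section

variable {Fq : Type} [Field Fq]

lemma toL_monomial (i : ℕ) (c : Fq) : toL (monomial i c) = HahnSeries.single (-(i : ℤ)) c := by
  rw [toL, tElem, aeval_monomial, HahnSeries.single_pow, HahnSeries.algebraMap_apply',
    PowerSeries.algebraMap_apply, HahnSeries.ofPowerSeries_C, HahnSeries.C_apply,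
    HahnSeries.single_mul_single]
  simp

lemma toL_mul (f g : Polynomial Fq) : toL (f * g) = toL f * toL g := map_mul _ f g

lemma toL_sub (f g : Polynomial Fq) : toL (f - g) = toL f - toL g := map_sub _ f g

lemma coeff_toL_of_pos (f : Polynomial Fq) {k : ℤ} (hk : 0 < k) : (toL f).coeff k = 0 := by
  induction f using Polynomial.induction_on' with
  | add p q hp hq => rw [toL, map_add, HahnSeries.coeff_add, ← toL, ← toL, hp, hq, add_zero]
  | monomial i c => rw [toL_monomial, HahnSeries.coeff_single_of_ne (by omega)]

lemma coeff_toL_neg (f : Polynomial Fq) (i : ℕ) : (toL f).coeff (-(i : ℤ)) = f.coeff i := by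
  induction f using Polynomial.induction_on' with
  | add p q hp hq => rw [toL, map_add, HahnSeries.coeff_add, ← toL, ← toL, hp, hq, coeff_add]
  | monomial j c => simp [toL_monomial, HahnSeries.coeff_single, coeff_monomial, eq_comm]

lemma toL_ne_zero {f : Polynomial Fq} (hf : f ≠ 0) : toL f ≠ 0 := by
  refine fun h ↦ hf (Polynomial.ext fun i ↦ ?_)
  rw [← coeff_toL_neg, h, HahnSeries.coeff_zero, coeff_zero]

lemma coeff_toL_mul_div_of_dvd {a g d : Polynomial Fq} (hgd : g ∣ d) {k : ℤ} (hk : 0 < k) :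
    (toL d * (toL a / toL g)).coeff k = 0 := by
  obtain ⟨h, rfl⟩ := hgd
  rcases eq_or_ne g 0 with rfl | hg
  · simp [toL]
  have hdiv : toL (g * h) * (toL a / toL g) = toL (h * a) := by
    rw [toL_mul, toL_mul]
    field_simp [toL_ne_zero hg]
  rw [hdiv, coeff_toL_of_pos _ hk]

variable [Fintype Fq]

lemma lt_order_of_nrm_lt {x : LaurentSeries Fq} (hx : x ≠ 0) {r : ℤ}
    (h : nrm x < (Fintype.card Fq : ℝ) ^ (-r)) : r < x.order := by
  rw [nrm, if_neg hx] at h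
  have := (zpow_lt_zpow_iff_right₀ (by exact_mod_cast Fintype.one_lt_card)).mp h
  omega

lemma nrm_mul_single_one (x : LaurentSeries Fq) (m : ℤ) :
    nrm (x * HahnSeries.single m 1) = nrm x * (Fintype.card Fq : ℝ) ^ (-m) := by
  rcases eq_or_ne x 0 with rfl | hx
  · simp [nrm]
  have hs : HahnSeries.single m (1 : Fq) ≠ 0 := HahnSeries.single_ne_zero one_ne_zero
  rw [nrm, nrm, if_neg (mul_ne_zero hx hs), if_neg hx, HahnSeries.order_mul hx hs,
    HahnSeries.order_single one_ne_zero, neg_add, zpow_add₀ (by simp)]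

/-- Since the valuation is discrete, norms below `q^{-r}` and `q^{-r'}` give the product
order at least `r + r' + 2`. -/
lemma coeff_mul_eq_zero_of_nrm_lt {x y : LaurentSeries Fq} {r r' k : ℤ}
    (hx : nrm x < (Fintype.card Fq : ℝ) ^ (-r)) (hy : nrm y < (Fintype.card Fq : ℝ) ^ (-r'))
    (hk : k ≤ r + r' + 1) : (x * y).coeff k = 0 := by
  rcases eq_or_ne x 0 with rfl | hx0
  · simp
  rcases eq_or_ne y 0 with rfl | hy0
  · simp
  apply HahnSeries.coeff_eq_zero_of_lt_order
  have := lt_order_of_nrm_lt hx0 hx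
  have := lt_order_of_nrm_lt hy0 hy
  rw [HahnSeries.order_mul hx0 hy0]
  omega

lemma Requiv.nrm_toL_sub_lt {s n : ℕ} {g f₁ f₂ : Polynomial Fq} (h : Requiv s g f₁ f₂)
    (hd₁ : f₁.natDegree = n) (hd₂ : f₂.natDegree = n) :
    nrm (toL (f₁ - f₂)) < (Fintype.card Fq : ℝ) ^ (-((s : ℤ) - n)) := by
  have hq : (0 : ℝ) < Fintype.card Fq := by exact_mod_cast Fintype.card_pos
  have h' := h.2
  rw [hd₁, hd₂, ← sub_mul, ← toL_sub, nrm_mul_single_one, ← lt_div_iff₀ (by positivity),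
    ← zpow_sub₀ hq.ne'] at h'
  rwa [show -((s : ℤ) - n) = -s - -n by ring]

end

lemma eQ_eq_of_coeff_one_eq {Fq : Type} [Field Fq] [Fintype Fq] (p : ℕ) [CharP Fq p]
    {x y : LaurentSeries Fq} (h : x.coeff 1 = y.coeff 1) : eQ p x = eQ p y := by
  rw [eQ, eQ, h]

theorem eQ_eq_of_Requiv_general
    (Fq : Type) [Field Fq] [Fintype Fq] (p : ℕ) [CharP Fq p]
    (n : ℕ) (θ : LaurentSeries Fq)
    (a g : Polynomial Fq)
    (happrox : nrm (θ - toL a / toL g)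
      < (Fintype.card Fq : ℝ) ^ (-((n : ℝ) / 2 + (g.natDegree : ℝ))))
    (f₁ f₂ : Polynomial Fq)
    (hd₁ : f₁.natDegree = n) (hd₂ : f₂.natDegree = n)
    (hequiv : Requiv (n - n / 2 - g.natDegree) g f₁ f₂) :
    eQ p (toL f₁ * θ) = eQ p (toL f₂ * θ) := by
  have hq : (1 : ℝ) < Fintype.card Fq := by exact_mod_cast Fintype.one_lt_card
  set β := θ - toL a / toL g
  have hβ : nrm β < (Fintype.card Fq : ℝ) ^ (-((n / 2 + g.natDegree : ℕ) : ℤ)) := by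
    refine happrox.trans_le ?_
    rw [← Real.rpow_intCast]
    refine Real.rpow_le_rpow_of_exponent_le hq.le ?_
    have : ((n / 2 : ℕ) : ℝ) ≤ n / 2 := Nat.cast_div_le
    rw [Int.cast_neg, Int.cast_natCast, Nat.cast_add]
    linarith
  have hsplit : toL f₁ * θ - toL f₂ * θ =
      toL (f₁ - f₂) * (toL a / toL g) + toL (f₁ - f₂) * β := by
    rw [toL_sub]; ring
  apply eQ_eq_of_coeff_one_eq
  rw [← sub_eq_zero, ← HahnSeries.coeff_sub, hsplit, HahnSeries.coeff_add,
    coeff_toL_mul_div_of_dvd hequiv.1 one_pos,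
    coeff_mul_eq_zero_of_nrm_lt (hequiv.nrm_toL_sub_lt hd₁ hd₂) hβ (by omega), add_zero]

/-- (Lemma 3.) With `a, g` the approximation of `θ` from Lemma 2 and
`s = n - ⌊n/2⌋ - deg g`, for any monic `f₁, f₂` of degree `n` with `f₁ ≡ f₂ mod R_{s,g}`
one has `e_q(f₁θ) = e_q(f₂θ)`. -/
theorem eQ_eq_of_Requiv
    (Fq : Type) [Field Fq] [Fintype Fq] (p : ℕ) [Fact p.Prime] [CharP Fq p]
    (n : ℕ) (hn : 1 ≤ n) (θ : LaurentSeries Fq) (hθ : θ ∈ TT Fq)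
    (a g : Polynomial Fq) (hcop : IsCoprime a g) (hgm : g.Monic)
    (hdeg : a.degree < g.degree) (hdeg2 : 2 * g.natDegree ≤ n)
    (happrox : nrm (θ - toL a / toL g)
      < (Fintype.card Fq : ℝ) ^ (-((n : ℝ) / 2 + (g.natDegree : ℝ))))
    (f₁ f₂ : Polynomial Fq) (h₁ : f₁.Monic) (h₂ : f₂.Monic)
    (hd₁ : f₁.natDegree = n) (hd₂ : f₂.natDegree = n)
    (hequiv : Requiv (n - n / 2 - g.natDegree) g f₁ f₂) :
    eQ p (toL f₁ * θ) = eQ p (toL f₂ * θ) :=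
  eQ_eq_of_Requiv_general Fq p n θ a g happrox f₁ f₂ hd₁ hd₂ hequiv
end

section
/- Let g ∈ F_q[t] be monic, squarefree, and of degree ≥ 1. Then ∑_{d | g, d monic} q^{−deg d} ≤ (1 + log(deg g)/log q) · e. -/
/-!
Common setup: `F_q((1/t))` is realized as `LaurentSeries Fq` (formal Laurent series in `X`)
under the identification `X = 1/t`; thus the coefficient of `t^i` is the coefficient of
`X^(-i)`, and `𝕋` consists of series supported on positive powers of `X`.
-/

open Polynomial
open scoped Classical

/-!
Since `g` is squarefree, its monic divisors are exactly the products of the subsets of the set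
`F` of its monic irreducible factors, so the sum equals `∏_{P ∈ F} (1 + q^{-deg P})`, which is at
most `exp (∑_{P ∈ F} q^{-deg P})`. Distinct monic irreducibles of degree `m` all divide
`X^{q^m} - X`, so there are at most `q^m / m` of them and the factors of degree `≤ M` contribute
at most the harmonic number `H_M`. With `M = ⌊log_q deg g⌋` we have `∑_{P ∈ F} deg P = deg g <
q^{M+1}`, so the factors of degree `> M` contribute at most `1/(M+1)`. Hence the exponent is at most
`H_{M+1} ≤ 1 + log (M+1) ≤ 1 + log (1 + log (deg g) / log q)`.
-/

open UniqueFactorizationMonoid Finset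

theorem Finset.sum_filter_lt_pow_le {ι : Type*} (s : Finset ι) (f : ι → ℕ) {c : ℝ} (hc0 : 0 ≤ c)
    (hc1 : c ≤ 1) (M : ℕ) :
    ∑ i ∈ s with M < f i, c ^ f i ≤ (∑ i ∈ s, (f i : ℝ)) * c ^ (M + 1) / (M + 1) := by
  have hterm : ∀ i ∈ {i ∈ s | M < f i}, c ^ f i ≤ f i * (c ^ (M + 1) / (M + 1)) := fun i hi ↦ by
    have hMi : M + 1 ≤ f i := (mem_filter.mp hi).2
    calc c ^ f i ≤ c ^ (M + 1) := pow_le_pow_of_le_one hc0 hc1 hMi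
      _ = (M + 1 : ℝ) * (c ^ (M + 1) / (M + 1)) := by field_simp
      _ ≤ f i * (c ^ (M + 1) / (M + 1)) := by gcongr; exact_mod_cast hMi
  calc ∑ i ∈ s with M < f i, c ^ f i ≤ ∑ i ∈ s with M < f i, f i * (c ^ (M + 1) / (M + 1)) :=
        sum_le_sum hterm
    _ ≤ ∑ i ∈ s, f i * (c ^ (M + 1) / (M + 1)) :=
        sum_le_sum_of_subset_of_nonneg (filter_subset _ _) fun _ _ _ ↦ by positivity
    _ = (∑ i ∈ s, (f i : ℝ)) * c ^ (M + 1) / (M + 1) := by rw [← sum_mul, mul_div_assoc]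

namespace Polynomial

variable {K : Type*} [Field K]

theorem eq_of_monic_of_irreducible_of_dvd {P Q : K[X]} (hPm : P.Monic) (hPi : Irreducible P)
    (hQm : Q.Monic) (hQi : Irreducible Q) (h : P ∣ Q) : P = Q :=
  eq_of_monic_of_associated hPm hQm (hPi.associated_of_dvd hQi h)

theorem mem_of_dvd_prod_of_monic_irreducible {T : Finset K[X]}
    (hT : ∀ Q ∈ T, Q.Monic ∧ Irreducible Q) {P : K[X]} (hPm : P.Monic) (hPi : Irreducible P)
    (h : P ∣ ∏ Q ∈ T, Q) : P ∈ T := by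
  obtain ⟨Q, hQ, hPQ⟩ := hPi.prime.exists_mem_finset_dvd h
  rwa [eq_of_monic_of_irreducible_of_dvd hPm hPi (hT Q hQ).1 (hT Q hQ).2 hPQ]

theorem injOn_prod_of_monic_irreducible :
    Set.InjOn (fun T : Finset K[X] ↦ ∏ Q ∈ T, Q) {T | ∀ Q ∈ T, Q.Monic ∧ Irreducible Q} := by
  have key : ∀ T₁ ∈ {T : Finset K[X] | ∀ Q ∈ T, Q.Monic ∧ Irreducible Q},
      ∀ T₂ ∈ {T : Finset K[X] | ∀ Q ∈ T, Q.Monic ∧ Irreducible Q},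
      ∏ Q ∈ T₁, Q = ∏ Q ∈ T₂, Q → T₁ ⊆ T₂ := fun T₁ h₁ T₂ h₂ heq P hP ↦
    mem_of_dvd_prod_of_monic_irreducible h₂ (h₁ P hP).1 (h₁ P hP).2
      (heq ▸ dvd_prod_of_mem _ hP)
  exact fun T₁ h₁ T₂ h₂ heq ↦ (key T₁ h₁ T₂ h₂ heq).antisymm (key T₂ h₂ T₁ h₁ heq.symm)

theorem monic_irreducible_of_mem_normalizedFactors {d P : K[X]}
    (hP : P ∈ normalizedFactors d) : P.Monic ∧ Irreducible P := by
  have hd : d ≠ 0 := by rintro rfl; simp at hP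
  obtain ⟨hPi, hPm, -⟩ := (Polynomial.mem_normalizedFactors_iff hd).mp hP
  exact ⟨hPm, hPi⟩

theorem Monic.prod_toFinset_normalizedFactors {d : K[X]} (hd : d.Monic) (hsf : Squarefree d) :
    ∏ P ∈ (normalizedFactors d).toFinset, P = d := by
  rw [prod_eq_multiset_prod, Multiset.toFinset_val,
    ((squarefree_iff_nodup_normalizedFactors hd.ne_zero).mp hsf).dedup, Multiset.map_id']
  simpa [hd.leadingCoeff] using leadingCoeff_mul_prod_normalizedFactors d

variable {g : K[X]}

theorem Monic.setOf_monic_dvd_eq_image_powerset (hg : g.Monic) (hsf : Squarefree g) :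
    {d : K[X] | d.Monic ∧ d ∣ g} =
      (fun T ↦ ∏ P ∈ T, P) '' ((normalizedFactors g).toFinset.powerset : Set (Finset K[X])) := by
  ext d
  constructor
  · rintro ⟨hdm, hdg⟩
    refine ⟨(normalizedFactors d).toFinset, ?_,
      hdm.prod_toFinset_normalizedFactors (hsf.squarefree_of_dvd hdg)⟩
    rw [mem_coe, mem_powerset]
    intro P hP
    rw [Multiset.mem_toFinset] at hP ⊢
    exact Multiset.mem_of_le
      ((dvd_iff_normalizedFactors_le_normalizedFactors hdm.ne_zero hg.ne_zero).mp hdg) hP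
  · rintro ⟨T, hT, rfl⟩
    rw [coe_powerset, Set.mem_preimage, Set.mem_powerset_iff, coe_subset] at hT
    refine ⟨monic_prod_of_monic _ _ fun P hP ↦ ?_, ?_⟩
    · exact (monic_irreducible_of_mem_normalizedFactors (Multiset.mem_toFinset.mp (hT hP))).1
    · conv_rhs => rw [← hg.prod_toFinset_normalizedFactors hsf]
      exact prod_dvd_prod_of_subset _ _ _ hT

theorem Monic.finsum_pow_natDegree_dvd {R : Type*} [CommSemiring R] (hg : g.Monic)
    (hsf : Squarefree g) (c : R) :
    ∑ᶠ d ∈ {d : K[X] | d.Monic ∧ d ∣ g}, c ^ d.natDegree =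
      ∏ P ∈ (normalizedFactors g).toFinset, (1 + c ^ P.natDegree) := by
  have hinj : Set.InjOn (fun T : Finset K[X] ↦ ∏ P ∈ T, P)
      ((normalizedFactors g).toFinset.powerset : Set (Finset K[X])) :=
    injOn_prod_of_monic_irreducible.mono fun T hT ↦ fun P hP ↦
      monic_irreducible_of_mem_normalizedFactors
        (Multiset.mem_toFinset.mp (mem_powerset.mp (mem_coe.mp hT) hP))
  rw [hg.setOf_monic_dvd_eq_image_powerset hsf, finsum_mem_image hinj, finsum_mem_coe_finset,
    prod_one_add]
  refine sum_congr rfl fun T hT ↦ ?_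
  rw [natDegree_prod_of_monic _ _ fun P hP ↦ ?_, prod_pow_eq_pow_sum]
  exact (monic_irreducible_of_mem_normalizedFactors
    (Multiset.mem_toFinset.mp (mem_powerset.mp hT hP))).1

variable [Fintype K]

theorem card_mul_le_card_pow_of_monic_irreducible {E : Finset K[X]} {m : ℕ}
    (hE : ∀ P ∈ E, P.Monic ∧ Irreducible P ∧ P.natDegree = m) :
    #E * m ≤ Fintype.card K ^ m := by
  rcases eq_or_ne m 0 with rfl | hm
  · simp
  have hq : 1 < Fintype.card K ^ m := Nat.one_lt_pow hm Fintype.one_lt_card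
  have hdvd : ∏ P ∈ E, P ∣ X ^ Fintype.card K ^ m - X := by
    refine prod_dvd_of_coprime (fun P hP Q hQ hPQ ↦ ?_) fun P hP ↦ ?_
    · obtain ⟨hPm, hPi, -⟩ := hE P hP
      obtain ⟨hQm, hQi, -⟩ := hE Q hQ
      exact hPi.coprime_iff_not_dvd.mpr fun h ↦
        hPQ (eq_of_monic_of_irreducible_of_dvd hPm hPi hQm hQi h)
    · obtain ⟨-, hPi, hPm⟩ := hE P hP
      rw [← Nat.card_eq_fintype_card, ← hPm]
      exact hPi.natDegree_dvd_iff_dvd_X_pow_card_pow_sub_X.mp dvd_rfl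
  calc #E * m = ∑ P ∈ E, P.natDegree := by
        rw [sum_congr rfl fun P hP ↦ (hE P hP).2.2, sum_const, smul_eq_mul]
    _ = (∏ P ∈ E, P).natDegree := (natDegree_prod_of_monic _ _ fun P hP ↦ (hE P hP).1).symm
    _ ≤ (X ^ Fintype.card K ^ m - X : K[X]).natDegree :=
        natDegree_le_of_dvd hdvd (FiniteField.X_pow_card_sub_X_ne_zero K hq)
    _ = Fintype.card K ^ m := FiniteField.X_pow_card_sub_X_natDegree_eq K hq

theorem sum_inv_pow_natDegree_filter_le_harmonic {F : Finset K[X]}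
    (hF : ∀ P ∈ F, P.Monic ∧ Irreducible P) (M : ℕ) :
    ∑ P ∈ F with P.natDegree ≤ M, ((Fintype.card K : ℝ)⁻¹) ^ P.natDegree ≤ harmonic M := by
  have hmaps : ∀ P ∈ {P ∈ F | P.natDegree ≤ M}, P.natDegree ∈ Icc 1 M := fun P hP ↦ by
    obtain ⟨hPF, hPM⟩ := mem_filter.mp hP
    exact mem_Icc.mpr ⟨(hF P hPF).2.natDegree_pos, hPM⟩
  rw [← sum_fiberwise_of_maps_to hmaps, harmonic_eq_sum_Icc]
  push_cast
  gcongr with m hm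
  set E := ({P ∈ F | P.natDegree ≤ M} : Finset K[X]).filter (·.natDegree = m)
  have hE : ∀ P ∈ E, P.Monic ∧ Irreducible P ∧ P.natDegree = m := fun P hP ↦ by
    simp only [E, mem_filter] at hP
    exact ⟨(hF P hP.1.1).1, (hF P hP.1.1).2, hP.2⟩
  have hcard : (#E * m : ℝ) ≤ (Fintype.card K : ℝ) ^ m := by
    exact_mod_cast card_mul_le_card_pow_of_monic_irreducible hE
  have hm0 : (0 : ℝ) < m := by exact_mod_cast (mem_Icc.mp hm).1
  rw [sum_congr rfl fun P hP ↦ by rw [(hE P hP).2.2], sum_const, nsmul_eq_mul, inv_pow,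
    ← div_eq_mul_inv, div_le_iff₀ (by positivity), ← div_eq_inv_mul, le_div_iff₀ hm0]
  exact hcard

theorem sum_inv_pow_natDegree_le_harmonic {F : Finset K[X]}
    (hF : ∀ P ∈ F, P.Monic ∧ Irreducible P) {M : ℕ}
    (hdeg : ∑ P ∈ F, P.natDegree ≤ Fintype.card K ^ (M + 1)) :
    ∑ P ∈ F, ((Fintype.card K : ℝ)⁻¹) ^ P.natDegree ≤ harmonic (M + 1) := by
  have hq : (0 : ℝ) < Fintype.card K := by exact_mod_cast Fintype.card_pos
  have htail : ∑ P ∈ F with M < P.natDegree, ((Fintype.card K : ℝ)⁻¹) ^ P.natDegree ≤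
      (↑(M + 1))⁻¹ := by
    have hdeg' : ∑ P ∈ F, (P.natDegree : ℝ) ≤ (Fintype.card K : ℝ) ^ (M + 1) := by
      exact_mod_cast hdeg
    calc _ ≤ (∑ P ∈ F, (P.natDegree : ℝ)) * (Fintype.card K : ℝ)⁻¹ ^ (M + 1) / (M + 1) :=
          F.sum_filter_lt_pow_le _ (by positivity)
            (inv_le_one_of_one_le₀ (by exact_mod_cast Fintype.card_pos)) M
      _ ≤ (Fintype.card K : ℝ) ^ (M + 1) * (Fintype.card K : ℝ)⁻¹ ^ (M + 1) / (M + 1) := by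
          gcongr
      _ = (↑(M + 1))⁻¹ := by rw [← mul_pow, mul_inv_cancel₀ hq.ne', one_pow]; push_cast; ring
  rw [← sum_filter_add_sum_filter_not F (·.natDegree ≤ M), harmonic_succ]
  push_cast
  simp only [not_le]
  exact add_le_add (sum_inv_pow_natDegree_filter_le_harmonic hF M) (by exact_mod_cast htail)

theorem sum_inv_pow_natDegree_le_one_add_log {F : Finset K[X]}
    (hF : ∀ P ∈ F, P.Monic ∧ Irreducible P) {n : ℕ} (hdeg : ∑ P ∈ F, P.natDegree ≤ n) :
    ∑ P ∈ F, ((Fintype.card K : ℝ)⁻¹) ^ P.natDegree ≤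
      1 + Real.log (1 + Real.log n / Real.log (Fintype.card K)) := by
  set M := Nat.log (Fintype.card K) n
  calc _ ≤ (harmonic (M + 1) : ℝ) := sum_inv_pow_natDegree_le_harmonic hF
        (hdeg.trans (Nat.lt_pow_succ_log_self Fintype.one_lt_card n).le)
    _ ≤ 1 + Real.log ↑(M + 1) := harmonic_le_one_add_log _
    _ ≤ 1 + Real.log (1 + Real.log n / Real.log (Fintype.card K)) := by
        gcongr
        rw [Real.log_div_log, Nat.cast_succ, add_comm]
        gcongr
        exact Real.natLog_le_logb _ _

end Polynomial

theorem sum_divisors_bound_general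
    (Fq : Type) [Field Fq] [Fintype Fq] (g : Polynomial Fq)
    (hg : g.Monic) (hsf : Squarefree g) :
    (∑ᶠ d ∈ {d : Polynomial Fq | d.Monic ∧ d ∣ g},
        (Fintype.card Fq : ℝ) ^ (-(d.natDegree : ℤ)))
      ≤ (1 + Real.log (g.natDegree) / Real.log (Fintype.card Fq)) * Real.exp 1 := by
  set F := (normalizedFactors g).toFinset
  have hF : ∀ P ∈ F, P.Monic ∧ Irreducible P := fun P hP ↦
    monic_irreducible_of_mem_normalizedFactors (Multiset.mem_toFinset.mp hP)
  have hdegF : ∑ P ∈ F, P.natDegree = g.natDegree := by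
    rw [← natDegree_prod_of_monic _ _ fun P hP ↦ (hF P hP).1,
      hg.prod_toFinset_normalizedFactors hsf]
  have hL : 0 ≤ Real.log g.natDegree / Real.log (Fintype.card Fq) :=
    div_nonneg (Real.log_natCast_nonneg _) (Real.log_natCast_nonneg _)
  simp only [zpow_neg, zpow_natCast, ← inv_pow]
  rw [hg.finsum_pow_natDegree_dvd hsf]
  calc _ ≤ Real.exp (∑ P ∈ F, ((Fintype.card Fq : ℝ)⁻¹) ^ P.natDegree) :=
        Real.prod_one_add_le_exp_sum F fun _ ↦ by positivity
    _ ≤ Real.exp (1 + Real.log (1 + Real.log g.natDegree / Real.log (Fintype.card Fq))) :=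
        Real.exp_le_exp.mpr (sum_inv_pow_natDegree_le_one_add_log hF hdegF.le)
    _ = _ := by rw [Real.exp_add, Real.exp_log (by positivity)]; ring

/-- (Lemma 4.) For `g` monic, squarefree, of degree `≥ 1`,
`∑_{d ∣ g, d monic} q^{-deg d} ≤ (1 + log(deg g)/log q)·e`. -/
theorem sum_divisors_bound
    (Fq : Type) [Field Fq] [Fintype Fq] (g : Polynomial Fq)
    (hg : g.Monic) (hsf : Squarefree g) (hdeg : 1 ≤ g.natDegree) :
    (∑ᶠ d ∈ {d : Polynomial Fq | d.Monic ∧ d ∣ g},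
        (Fintype.card Fq : ℝ) ^ (-(d.natDegree : ℤ)))
      ≤ (1 + Real.log (g.natDegree) / Real.log (Fintype.card Fq)) * Real.exp 1 :=
  sum_divisors_bound_general Fq g hg hsf
end

section
/- Let n ≥ 1, let g ∈ F_q[t] be monic with deg g ≤ n − ⌊n/2⌋, and set s = n − ⌊n/2⌋ − deg g ≥ 0. Then the set S*_{s,g} = { t^{⌊n/2⌋} g b₁ + b₂ : b₁ ∈ F_q[t] monic with deg b₁ = s, b₂ ∈ F_q[t] with deg b₂ < deg g and gcd(b₂, g) = 1 } consists of monic polynomials of degree n coprime to g, and every monic polynomial of degree n that is coprime to g is R_{s,g}-equivalent to exactly one element of S*_{s,g}. -/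
/-!
Common setup: `F_q((1/t))` is realized as `LaurentSeries Fq` (formal Laurent series in `X`)
under the identification `X = 1/t`; thus the coefficient of `t^i` is the coefficient of
`X^(-i)`, and `𝕋` consists of series supported on positive powers of `X`.
-/

open Polynomial
open scoped Classical

/-!
Put `P = t^⌊n/2⌋ g`, so that `deg P = n - s`. For monic `a`, `b` of the same degree `n`,
`a / t^n - b / t^n` is `(a - b) / t^n`, of norm `q^(deg (a - b) - n)`; hence the norm condition of
`R_{s,g}` says `deg (a - b) < deg P`, i.e. `a` and `b` have the same quotient on division by `P`,
while `g ∣ a - b` says they have the same remainder modulo `g`. An element `P b₁ + b₂` of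
`S*_{s,g}` has quotient `b₁` by `P` and remainder `b₂` modulo `g` (as `g ∣ P` and
`deg b₂ < deg g`), so the unique representative of `f` is `P (f div P) + (f mod g)`.
-/

lemma IsCoprime.mul_add_of_dvd {A : Type*} [CommRing A] {P g q r : A} (h : IsCoprime r g)
    (hgP : g ∣ P) : IsCoprime (P * q + r) g := by
  obtain ⟨c, rfl⟩ := hgP
  simpa only [add_comm, mul_assoc] using h.add_mul_left_left (c * q)

namespace Polynomial

variable {R : Type*} [CommRing R] {P g q r a b : R[X]}

lemma mul_add_divByMonic (hP : P.Monic) (hr : r.degree < P.degree) : (P * q + r) /ₘ P = q :=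
  (div_modByMonic_unique q r hP ⟨add_comm _ _, hr⟩).1

lemma mul_add_modByMonic_of_dvd (hg : g.Monic) (hgP : g ∣ P) (hr : r.degree < g.degree) :
    (P * q + r) %ₘ g = r := by
  obtain ⟨c, rfl⟩ := hgP
  exact (div_modByMonic_unique (c * q) r hg ⟨by ring, hr⟩).2

lemma sub_divByMonic (hP : P.Monic) : (a - b) /ₘ P = a /ₘ P - b /ₘ P := by
  nontriviality R
  refine (div_modByMonic_unique _ (a %ₘ P - b %ₘ P) hP ⟨?_, ?_⟩).1
  · linear_combination modByMonic_add_div a P - modByMonic_add_div b P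
  · exact (degree_sub_le _ _).trans_lt
      (max_lt (degree_modByMonic_lt _ hP) (degree_modByMonic_lt _ hP))

lemma degree_sub_lt_iff_divByMonic_eq [Nontrivial R] (hP : P.Monic) :
    (a - b).degree < P.degree ↔ a /ₘ P = b /ₘ P := by
  rw [← divByMonic_eq_zero_iff hP, sub_divByMonic hP, sub_eq_zero]

lemma dvd_sub_iff_modByMonic_eq (hg : g.Monic) : g ∣ a - b ↔ a %ₘ g = b %ₘ g := by
  rw [← modByMonic_eq_zero_iff_dvd hg, sub_modByMonic, sub_eq_zero]

lemma degree_lt_degree_mul_of_monic [Nontrivial R] (hq : q.Monic)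
    (hr : r.degree < P.degree) : r.degree < (P * q).degree := by
  rw [hq.degree_mul]
  exact hr.trans_le (le_add_of_nonneg_right (zero_le_degree_iff.2 hq.ne_zero))

lemma Monic.mul_add_of_degree_lt [Nontrivial R] (hP : P.Monic) (hq : q.Monic)
    (hr : r.degree < P.degree) : (P * q + r).Monic :=
  (hP.mul hq).add_of_left (degree_lt_degree_mul_of_monic hq hr)

lemma natDegree_mul_add_of_degree_lt [Nontrivial R] (hP : P.Monic) (hq : q.Monic)
    (hr : r.degree < P.degree) : (P * q + r).natDegree = P.natDegree + q.natDegree := by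
  rw [natDegree_add_eq_left_of_degree_lt (degree_lt_degree_mul_of_monic hq hr),
    hP.natDegree_mul hq]

lemma _root_.IsCoprime.modByMonic (h : IsCoprime a g) : IsCoprime (a %ₘ g) g :=
  IsCoprime.of_add_mul_left_left (by rwa [modByMonic_add_div])

end Polynomial

section ReducedRepresentatives

variable {R : Type*} [CommRing R] [IsDomain R] {P g f y : R[X]} {s : ℕ}

/-- `reducedReps (t ^ ⌊n/2⌋ * g) g s` is the set `S*_{s,g}`. -/
def reducedReps (P g : R[X]) (s : ℕ) : Set R[X] :=
  {f | ∃ b₁ b₂ : R[X], b₁.Monic ∧ b₁.natDegree = s ∧ b₂.degree < g.degree ∧ IsCoprime b₂ g ∧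
    f = P * b₁ + b₂}

lemma monic_natDegree_isCoprime_of_mem_reducedReps (hP : P.Monic) (hgP : g ∣ P)
    (hy : y ∈ reducedReps P g s) : y.Monic ∧ y.natDegree = P.natDegree + s ∧ IsCoprime y g := by
  obtain ⟨b₁, b₂, hb₁, rfl, hb₂, hcop, rfl⟩ := hy
  have hb₂P := hb₂.trans_le (degree_le_of_dvd hgP hP.ne_zero)
  exact ⟨hP.mul_add_of_degree_lt hb₁ hb₂P, natDegree_mul_add_of_degree_lt hP hb₁ hb₂P,
    hcop.mul_add_of_dvd hgP⟩

lemma eq_mul_divByMonic_add_modByMonic_of_mem_reducedReps (hP : P.Monic) (hg : g.Monic)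
    (hgP : g ∣ P) (hy : y ∈ reducedReps P g s) : y = P * (y /ₘ P) + y %ₘ g := by
  obtain ⟨b₁, b₂, -, -, hb₂, -, rfl⟩ := hy
  rw [mul_add_divByMonic hP (hb₂.trans_le (degree_le_of_dvd hgP hP.ne_zero)),
    mul_add_modByMonic_of_dvd hg hgP hb₂]

lemma mul_divByMonic_add_modByMonic_mem_reducedReps (hP : P.Monic) (hg : g.Monic)
    (hf : f.Monic) (hPf : P.natDegree ≤ f.natDegree) (hcop : IsCoprime f g) :
    P * (f /ₘ P) + f %ₘ g ∈ reducedReps P g (f.natDegree - P.natDegree) := by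
  have hPf' : P.degree ≤ f.degree := by
    rwa [degree_eq_natDegree hP.ne_zero, degree_eq_natDegree hf.ne_zero, Nat.cast_le]
  exact ⟨f /ₘ P, f %ₘ g, (leadingCoeff_divByMonic_of_monic hP hPf').trans hf,
    natDegree_divByMonic f hP, degree_modByMonic_lt f hg, hcop.modByMonic, rfl⟩

end ReducedRepresentatives

section LaurentEmbedding

variable {Fq : Type} [Field Fq]

lemma toL_sub_s8 (a b : Fq[X]) : toL (a - b) = toL a - toL b :=
  map_sub _ a b

lemma coeff_toL (p : Fq[X]) (j : ℤ) :
    (toL p).coeff j = if j ≤ 0 then p.coeff (-j).toNat else 0 := by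
  induction p using Polynomial.induction_on' with
  | add p q hp hq =>
    rw [toL, map_add, HahnSeries.coeff_add, ← toL, ← toL, hp, hq]
    split_ifs <;> simp
  | monomial i c =>
    rw [toL_monomial, HahnSeries.coeff_single, coeff_monomial]
    split_ifs <;> first | rfl | omega

lemma coeff_toL_neg_natDegree (p : Fq[X]) : (toL p).coeff (-p.natDegree) = p.leadingCoeff := by
  rw [coeff_toL, if_pos (by omega), neg_neg, Int.toNat_natCast, leadingCoeff]

lemma toL_ne_zero_s8 {p : Fq[X]} (hp : p ≠ 0) : toL p ≠ 0 :=
  HahnSeries.ne_zero_of_coeff_ne_zero (by rwa [coeff_toL_neg_natDegree, leadingCoeff_ne_zero])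

lemma order_toL {p : Fq[X]} (hp : p ≠ 0) : (toL p).order = -p.natDegree := by
  refine le_antisymm (HahnSeries.order_le_of_coeff_ne_zero ?_)
    ((HahnSeries.le_order_iff_forall (toL_ne_zero_s8 hp)).2 fun j hj ↦ ?_)
  · rwa [coeff_toL_neg_natDegree, leadingCoeff_ne_zero]
  · rw [coeff_toL, if_pos (by omega)]
    exact coeff_eq_zero_of_natDegree_lt (by omega)

lemma nrm_toL_mul_single_lt_iff [Fintype Fq] (p : Fq[X]) (n s : ℕ) :
    nrm (toL p * HahnSeries.single (n : ℤ) 1) < (Fintype.card Fq : ℝ) ^ (-(s : ℤ)) ↔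
      p.degree < ↑(n - s) := by
  have hq : (1 : ℝ) < Fintype.card Fq := by exact_mod_cast Fintype.one_lt_card
  rcases eq_or_ne p 0 with rfl | hp
  · simp only [toL, map_zero, zero_mul, nrm, if_true, degree_zero]
    exact iff_of_true (by positivity) (WithBot.bot_lt_coe _)
  have hsingle : HahnSeries.single (n : ℤ) (1 : Fq) ≠ 0 := HahnSeries.single_ne_zero one_ne_zero
  rw [nrm, if_neg (mul_ne_zero (toL_ne_zero_s8 hp) hsingle), zpow_lt_zpow_iff_right₀ hq,
    HahnSeries.order_mul (toL_ne_zero_s8 hp) hsingle, order_toL hp,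
    HahnSeries.order_single one_ne_zero, degree_eq_natDegree hp, Nat.cast_lt]
  omega

lemma requiv_iff [Fintype Fq] {s : ℕ} {g a b : Fq[X]} (hab : a.natDegree = b.natDegree) :
    Requiv s g a b ↔ g ∣ a - b ∧ (a - b).degree < ↑(a.natDegree - s) := by
  rw [Requiv, ← hab, ← sub_mul, ← toL_sub_s8, nrm_toL_mul_single_lt_iff]

lemma requiv_iff_divByMonic_eq_and_modByMonic_eq [Fintype Fq] {s : ℕ} {P g a b : Fq[X]}
    (hg : g.Monic) (hP : P.Monic) (hPdeg : P.natDegree = a.natDegree - s)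
    (hab : a.natDegree = b.natDegree) :
    Requiv s g a b ↔ a /ₘ P = b /ₘ P ∧ a %ₘ g = b %ₘ g := by
  rw [requiv_iff hab, ← hPdeg, ← degree_eq_natDegree hP.ne_zero,
    degree_sub_lt_iff_divByMonic_eq hP, dvd_sub_iff_modByMonic_eq hg, and_comm]

lemma requiv_iff_eq_of_mem_reducedReps [Fintype Fq] {s : ℕ} {P g f y : Fq[X]} (hP : P.Monic)
    (hg : g.Monic) (hgP : g ∣ P) (hPf : P.natDegree + s = f.natDegree)
    (hy : y ∈ reducedReps P g s) : Requiv s g f y ↔ y = P * (f /ₘ P) + f %ₘ g := by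
  have hydeg := (monic_natDegree_isCoprime_of_mem_reducedReps hP hgP hy).2.1
  rw [requiv_iff_divByMonic_eq_and_modByMonic_eq hg hP (by omega) (by omega)]
  constructor
  · rintro ⟨hdiv, hmod⟩
    rw [eq_mul_divByMonic_add_modByMonic_of_mem_reducedReps hP hg hgP hy, hdiv, hmod]
  · rintro rfl
    have hr := degree_modByMonic_lt f hg
    rw [mul_add_divByMonic hP (hr.trans_le (degree_le_of_dvd hgP hP.ne_zero)),
      mul_add_modByMonic_of_dvd hg hgP hr]
    exact ⟨rfl, rfl⟩

end LaurentEmbedding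

theorem reduced_representatives_complete_general
    (Fq : Type) [Field Fq] [Fintype Fq] (n : ℕ)
    (g : Polynomial Fq) (hg : g.Monic) (hdeg : g.natDegree ≤ n - n / 2)
    (s : ℕ) (hs : s = n - n / 2 - g.natDegree)
    (S : Set (Polynomial Fq))
    (hS : S = {f : Polynomial Fq | ∃ b₁ b₂ : Polynomial Fq,
      b₁.Monic ∧ b₁.natDegree = s ∧ b₂.degree < g.degree ∧ IsCoprime b₂ g ∧
      f = X ^ (n / 2) * g * b₁ + b₂}) :
    (∀ f ∈ S, f.Monic ∧ f.natDegree = n ∧ IsCoprime f g) ∧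
    (∀ f : Polynomial Fq, f.Monic → f.natDegree = n → IsCoprime f g →
      ∃! b : Polynomial Fq, b ∈ S ∧ Requiv s g f b) := by
  set P : Fq[X] := X ^ (n / 2) * g
  have hP : P.Monic := (monic_X_pow _).mul hg
  have hgP : g ∣ P := dvd_mul_left g _
  have hPdeg : P.natDegree + s = n := by
    rw [(monic_X_pow _).natDegree_mul hg, natDegree_X_pow]
    omega
  rw [show S = reducedReps P g s from hS]
  refine ⟨fun y hy ↦ ?_, fun f hf hfdeg hcop ↦ ?_⟩
  · obtain ⟨hym, hydeg, hycop⟩ := monic_natDegree_isCoprime_of_mem_reducedReps hP hgP hy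
    exact ⟨hym, hydeg.trans hPdeg, hycop⟩
  have hrep := mul_divByMonic_add_modByMonic_mem_reducedReps hP hg hf (by omega) hcop
  rw [hfdeg, ← hPdeg, Nat.add_sub_cancel_left] at hrep
  have hequiv : ∀ y ∈ reducedReps P g s, Requiv s g f y ↔ y = P * (f /ₘ P) + f %ₘ g :=
    fun y ↦ requiv_iff_eq_of_mem_reducedReps hP hg hgP (by omega)
  exact ⟨_, ⟨hrep, (hequiv _ hrep).2 rfl⟩, fun y ⟨hy, hfy⟩ ↦ (hequiv y hy).1 hfy⟩

/-- The set `S*_{s,g} = {t^{⌊n/2⌋} g b₁ + b₂ : b₁ monic of degree s,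
deg b₂ < deg g, (b₂, g) = 1}` (with `s = n - ⌊n/2⌋ - deg g`) consists of monic polynomials of
degree `n` coprime to `g`, and every monic polynomial of degree `n` coprime to `g` is
`R_{s,g}`-equivalent to exactly one element of it. -/
theorem reduced_representatives_complete
    (Fq : Type) [Field Fq] [Fintype Fq] (n : ℕ) (hn : 1 ≤ n)
    (g : Polynomial Fq) (hg : g.Monic) (hdeg : g.natDegree ≤ n - n / 2)
    (s : ℕ) (hs : s = n - n / 2 - g.natDegree)
    (S : Set (Polynomial Fq))
    (hS : S = {f : Polynomial Fq | ∃ b₁ b₂ : Polynomial Fq,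
      b₁.Monic ∧ b₁.natDegree = s ∧ b₂.degree < g.degree ∧ IsCoprime b₂ g ∧
      f = X ^ (n / 2) * g * b₁ + b₂}) :
    (∀ f ∈ S, f.Monic ∧ f.natDegree = n ∧ IsCoprime f g) ∧
    (∀ f : Polynomial Fq, f.Monic → f.natDegree = n → IsCoprime f g →
      ∃! b : Polynomial Fq, b ∈ S ∧ Requiv s g f b) :=
  reduced_representatives_complete_general Fq n g hg hdeg s hs S hS
end

section
/- For every positive integer k, the binomial coefficient C(3k, k) satisfies C(3k, k) < (1/√(4πk/3)) · (27/4)^k, i.e. C(3k, k) < √(3/(4πk)) · (3√3/2)^{2k}. -/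
/-!
Common setup: `F_q((1/t))` is realized as `LaurentSeries Fq` (formal Laurent series in `X`)
under the identification `X = 1/t`; thus the coefficient of `t^i` is the coefficient of
`X^(-i)`, and `𝕋` consists of series supported on positive powers of `X`.
-/

open Polynomial
open scoped Classical

/-! With `n! = s_n √(2n) (n/e)^n`, where the Stirling sequence `s_n` decreases to `√π`, one has
`C(3k, k) = s_{3k} / (s_k s_{2k}) · √(3/(4k)) · (27/4)^k`, so the claim is `s_{3k} √π < s_k s_{2k}`.
Telescoping the series for `log s_n - log s_{n+1}` between `n` and `∞` gives
`√π e^{1/(12n+6)} ≤ s_n ≤ √π e^{1/(12n)}`; as `1/(36k) < 1/(12k+6)` and `√π ≤ s_{2k}`, this suffices. -/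

open Filter Topology

theorem sub_le_of_tendsto_of_sub_succ_le {f g : ℕ → ℝ} {a : ℝ} (hf : Tendsto f atTop (𝓝 a))
    (hg : Tendsto g atTop (𝓝 0)) (h : ∀ n, f n - f (n + 1) ≤ g n - g (n + 1)) (n : ℕ) :
    f n - a ≤ g n := by
  have hmono : Monotone fun m => f m - g m := monotone_nat_of_le_succ fun m => by
    linarith [h m]
  linarith [hmono.ge_of_tendsto (by simpa using hf.sub hg) n]

theorem le_sub_of_tendsto_of_sub_succ_le {f g : ℕ → ℝ} {a : ℝ} (hf : Tendsto f atTop (𝓝 a))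
    (hg : Tendsto g atTop (𝓝 0)) (h : ∀ n, g n - g (n + 1) ≤ f n - f (n + 1)) (n : ℕ) :
    g n ≤ f n - a := by
  have := sub_le_of_tendsto_of_sub_succ_le (f := fun m => -f m) (g := fun m => -g m) hf.neg
    (by simpa using hg.neg) (fun m => by linarith [h m]) n
  linarith

theorem tendsto_one_div_mul_natCast_succ_add {a : ℝ} (ha : 0 < a) (b : ℝ) :
    Tendsto (fun n : ℕ => 1 / (a * (n + 1 : ℕ) + b)) atTop (𝓝 0) :=
  tendsto_const_nhds.div_atTop <| tendsto_atTop_add_const_right _ b <|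
    (tendsto_natCast_atTop_atTop.comp (tendsto_add_atTop_nat 1)).const_mul_atTop ha

namespace Stirling

open Real

theorem tendsto_log_stirlingSeq_succ :
    Tendsto (fun n : ℕ => log (stirlingSeq (n + 1))) atTop (𝓝 (log √π)) :=
  (tendsto_stirlingSeq_sqrt_pi.comp (tendsto_add_atTop_nat 1)).log
    (Real.sqrt_pos.mpr pi_pos).ne'

theorem stirlingSeq_le_sqrt_pi_mul_exp {n : ℕ} (hn : n ≠ 0) :
    stirlingSeq n ≤ √π * exp (1 / (12 * n)) := by
  obtain ⟨n, rfl⟩ := Nat.exists_eq_succ_of_ne_zero hn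
  have hstep (m : ℕ) : log (stirlingSeq (m + 1)) - log (stirlingSeq (m + 1 + 1)) ≤
      1 / (12 * (m + 1 : ℕ) + 0) - 1 / (12 * (m + 1 + 1 : ℕ) + 0) := by
    refine (log_stirlingSeq_sdiff_le (m + 1)).trans_eq ?_
    push_cast
    field_simp
    ring
  have := sub_le_of_tendsto_of_sub_succ_le tendsto_log_stirlingSeq_succ
    (tendsto_one_div_mul_natCast_succ_add (by norm_num) 0) hstep n
  rw [← log_le_log_iff (stirlingSeq'_pos n) (by positivity), log_mul (by positivity)
    (by positivity), log_exp]
  simpa [add_comm] using this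

theorem sqrt_pi_mul_exp_le_stirlingSeq {n : ℕ} (hn : n ≠ 0) :
    √π * exp (1 / (12 * n + 6)) ≤ stirlingSeq n := by
  obtain ⟨n, rfl⟩ := Nat.exists_eq_succ_of_ne_zero hn
  have hstep (m : ℕ) : 1 / (12 * (m + 1 : ℕ) + 6) - 1 / (12 * (m + 1 + 1 : ℕ) + 6) ≤
      log (stirlingSeq (m + 1)) - log (stirlingSeq (m + 1 + 1)) := by
    refine le_trans ?_ (le_hasSum (log_stirlingSeq_sdiff_hasSum m) 0 fun j _ => by positivity)
    have hm : (0 : ℝ) ≤ m := m.cast_nonneg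
    push_cast
    rw [div_sub_div _ _ (by positivity) (by positivity), div_le_iff₀ (by positivity)]
    field_simp
    nlinarith
  have := le_sub_of_tendsto_of_sub_succ_le tendsto_log_stirlingSeq_succ
    (tendsto_one_div_mul_natCast_succ_add (by norm_num) 6) hstep n
  rw [← log_le_log_iff (by positivity) (stirlingSeq'_pos n), log_mul (by positivity)
    (by positivity), log_exp]
  linarith

theorem stirlingSeq_three_mul_mul_sqrt_pi_lt {k : ℕ} (hk : k ≠ 0) :
    stirlingSeq (3 * k) * √π < stirlingSeq k * stirlingSeq (2 * k) := by
  have hk' : (1 : ℝ) ≤ k := by exact_mod_cast Nat.one_le_iff_ne_zero.mpr hk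
  calc stirlingSeq (3 * k) * √π ≤ √π * exp (1 / (12 * (3 * k : ℕ))) * √π := by
        gcongr; exact stirlingSeq_le_sqrt_pi_mul_exp (by omega)
    _ < √π * exp (1 / (12 * k + 6)) * √π := by
        gcongr
        push_cast
        linarith
    _ ≤ stirlingSeq k * stirlingSeq (2 * k) :=
        mul_le_mul (sqrt_pi_mul_exp_le_stirlingSeq hk) (sqrt_pi_le_stirlingSeq (by omega))
          (sqrt_nonneg π) ((sqrt_nonneg π).trans (sqrt_pi_le_stirlingSeq hk))

theorem factorial_eq_stirlingSeq_mul {n : ℕ} (hn : n ≠ 0) :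
    (n.factorial : ℝ) = stirlingSeq n * (√(2 * n) * (n / exp 1) ^ n) := by
  rw [stirlingSeq, div_mul_cancel₀]
  have : (0 : ℝ) < n := by positivity
  positivity

theorem add_choose_mul_stirlingSeq_mul {k m : ℕ} (hk : k ≠ 0) (hm : m ≠ 0) :
    ((k + m).choose k : ℝ) * (stirlingSeq k * stirlingSeq m) =
      stirlingSeq (k + m) * (√((k + m) / (2 * k * m)) * ((k + m) ^ (k + m) / (k ^ k * m ^ m))) := by
  have hk' : (0 : ℝ) < k := by positivity
  have hm' : (0 : ℝ) < m := by positivity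
  have hfact : ((k + m).choose k : ℝ) * k.factorial * m.factorial = (k + m).factorial := by
    rw [Nat.choose_symm_add]
    exact_mod_cast Nat.add_choose_mul_factorial_mul_factorial k m
  have hsqrt : √(2 * k) * √(2 * m) * √((k + m) / (2 * k * m)) = √(2 * (k + m)) := by
    rw [← Real.sqrt_mul (by positivity), ← Real.sqrt_mul (by positivity)]
    congr 1
    field_simp
  have hpow : (k / exp 1) ^ k * (m / exp 1) ^ m * ((k + m) ^ (k + m) / (k ^ k * m ^ m)) =
      ((k + m) / exp 1) ^ (k + m) := by
    rw [div_pow, div_pow, div_pow, pow_add (exp 1)]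
    field_simp
  rw [factorial_eq_stirlingSeq_mul hk, factorial_eq_stirlingSeq_mul hm,
    factorial_eq_stirlingSeq_mul (by omega)] at hfact
  push_cast at hfact
  rw [← hsqrt, ← hpow] at hfact
  have hpos : 0 < √(2 * k) * (k / exp 1) ^ k * (√(2 * m) * (m / exp 1) ^ m) := by positivity
  refine mul_right_cancel₀ hpos.ne' ?_
  linear_combination hfact

end Stirling

open Real Stirling in
theorem cast_choose_three_mul_lt {k : ℕ} (hk : k ≠ 0) :
    ((3 * k).choose k : ℝ) < √(3 / (4 * π * k)) * (27 / 4) ^ k := by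
  have hk' : (0 : ℝ) < k := by positivity
  have hsplit : 3 * k = k + 2 * k := by ring
  have hbinom := add_choose_mul_stirlingSeq_mul hk (m := 2 * k) (by omega)
  have hsqrt : √(((k : ℝ) + (2 * k : ℕ)) / (2 * k * (2 * k : ℕ))) = √(3 / (4 * π * k)) * √π := by
    rw [← Real.sqrt_mul (by positivity)]
    congr 1
    push_cast
    field_simp
    ring
  have hpow : ((k : ℝ) + (2 * k : ℕ)) ^ (k + 2 * k) / (k ^ k * (2 * k : ℕ) ^ (2 * k)) =
      (27 / 4) ^ k := by
    push_cast
    rw [show (k : ℝ) + 2 * k = 3 * k by ring, pow_add, pow_mul, pow_mul, mul_pow, mul_pow, mul_pow]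
    field_simp
    rw [← mul_pow, ← mul_pow, ← mul_pow]
    congr 1
    ring
  rw [hsqrt, hpow, ← hsplit] at hbinom
  have hpos : 0 < stirlingSeq k * stirlingSeq (2 * k) := by
    have hπ : 0 < √π := Real.sqrt_pos.mpr pi_pos
    exact mul_pos (hπ.trans_le (sqrt_pi_le_stirlingSeq hk))
      (hπ.trans_le (sqrt_pi_le_stirlingSeq (by omega)))
  refine lt_of_mul_lt_mul_right ?_ hpos.le
  calc ((3 * k).choose k : ℝ) * (stirlingSeq k * stirlingSeq (2 * k))
      = stirlingSeq (3 * k) * √π * (√(3 / (4 * π * k)) * (27 / 4) ^ k) := by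
        rw [hbinom]; ring
    _ < stirlingSeq k * stirlingSeq (2 * k) * (√(3 / (4 * π * k)) * (27 / 4) ^ k) :=
        mul_lt_mul_of_pos_right (stirlingSeq_three_mul_mul_sqrt_pi_lt hk) (by positivity)
    _ = _ := mul_comm _ _

/-- For every positive integer `k`,
`C(3k, k) < (1/√(4πk/3))·(27/4)^k`, i.e. `C(3k, k) < √(3/(4πk))·(3√3/2)^{2k}`. -/
theorem choose_three_k_k_bound (k : ℕ) (hk : 0 < k) :
    (Nat.choose (3 * k) k : ℝ)
        < 1 / Real.sqrt (4 * Real.pi * k / 3) * (27 / 4) ^ k ∧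
    (Nat.choose (3 * k) k : ℝ)
        < Real.sqrt (3 / (4 * Real.pi * k)) * (3 * Real.sqrt 3 / 2) ^ (2 * k) := by
  have h := cast_choose_three_mul_lt hk.ne'
  have hpow : (3 * Real.sqrt 3 / 2) ^ (2 * k) = (27 / 4 : ℝ) ^ k := by
    rw [pow_mul, div_pow, mul_pow, Real.sq_sqrt (by norm_num)]
    norm_num
  refine ⟨?_, hpow ▸ h⟩
  rwa [one_div, ← Real.sqrt_inv, inv_div]
end

section
/- Let q be a prime power and N ≥ 1 an integer. Then ∏_{k=1}^{N} (1 + q^{−k})^{π_q(k)} ≤ e·N, where π_q(k) denotes the number of monic irreducible polynomials of degree k in F_q[t]. -/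
/-!
Common setup: `F_q((1/t))` is realized as `LaurentSeries Fq` (formal Laurent series in `X`)
under the identification `X = 1/t`; thus the coefficient of `t^i` is the coefficient of
`X^(-i)`, and `𝕋` consists of series supported on positive powers of `X`.
-/

open Polynomial
open scoped Classical

-- auxiliary lemmas
lemma irred_dvd_X_pow_card_sub_X {Fq : Type} [Field Fq] [Fintype Fq]
    {f : Polynomial Fq} (hf : Irreducible f) (hm : f.Monic) :
    f ∣ X ^ (Fintype.card Fq ^ f.natDegree) - X := by
  haveI := Fact.mk hf
  have hf0 : f ≠ 0 := hm.ne_zero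
  haveI : Module.Finite Fq (AdjoinRoot f) := (AdjoinRoot.powerBasis hf0).finite
  haveI : Finite (AdjoinRoot f) := Module.finite_of_finite Fq
  haveI : Fintype (AdjoinRoot f) := Fintype.ofFinite _
  have hcard : Fintype.card (AdjoinRoot f) = Fintype.card Fq ^ f.natDegree := by
    rw [Module.card_eq_pow_finrank (K := Fq) (V := AdjoinRoot f),
      (AdjoinRoot.powerBasis hf0).finrank, AdjoinRoot.powerBasis_dim]
  rw [← AdjoinRoot.mk_eq_zero]
  have := FiniteField.pow_card (AdjoinRoot.root f)
  rw [hcard] at this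
  rw [map_sub, map_pow, AdjoinRoot.mk_X, this, sub_self]

lemma key_count (Fq : Type) [Field Fq] [Fintype Fq] (k : ℕ) (hk : 1 ≤ k) :
    k * Nat.card {f : Polynomial Fq // f.Monic ∧ Irreducible f ∧ f.natDegree = k}
      ≤ Fintype.card Fq ^ k := by
  classical
  set q := Fintype.card Fq with hq
  have hq1 : 1 < q := Fintype.one_lt_card
  have hqk1 : 1 < q ^ k := one_lt_pow₀ hq1 (by omega)
  obtain ⟨n, hpP, hcard⟩ := FiniteField.card Fq (ringChar Fq)
  have hpdvd : ringChar Fq ∣ q ^ k := by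
    rw [hq, hcard]
    exact dvd_pow (dvd_pow_self _ n.pos.ne') (by omega)
  set g : Polynomial Fq := X ^ (q ^ k) - X with hg
  have hgdeg : g.natDegree = q ^ k := by
    rw [hg, natDegree_sub_eq_left_of_natDegree_lt] <;>
      simp [natDegree_X_pow, hqk1]
  have hg0 : g ≠ 0 := by
    intro h
    rw [h] at hgdeg
    simp at hgdeg; omega
  have hsep : g.Separable := galois_poly_separable (ringChar Fq) (q ^ k) hpdvd
  have hsqf : Squarefree g := hsep.squarefree
  set S : Finset (Polynomial Fq) :=
    (UniqueFactorizationMonoid.normalizedFactors g).toFinset.filter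
      (fun f => f.Monic ∧ Irreducible f ∧ f.natDegree = k) with hS
  have hmem : ∀ f : Polynomial Fq, f ∈ S ↔ f.Monic ∧ Irreducible f ∧ f.natDegree = k := by
    intro f
    constructor
    · intro hf
      exact (Finset.mem_filter.mp hf).2
    · rintro ⟨hmo, hirr, hdeg⟩
      refine Finset.mem_filter.mpr ⟨?_, hmo, hirr, hdeg⟩
      rw [Multiset.mem_toFinset]
      have hdvd : f ∣ g := by
        have := irred_dvd_X_pow_card_sub_X hirr hmo
        rwa [hdeg] at this
      obtain ⟨r, hr, har⟩ :=
        UniqueFactorizationMonoid.exists_mem_normalizedFactors_of_dvd hg0 hirr hdvd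
      have : f = r := by
        have h1 : normalize f = normalize r :=
          normalize_eq_normalize_iff.mpr ⟨har.dvd, har.symm.dvd⟩
        rwa [hmo.normalize_eq_self,
          UniqueFactorizationMonoid.normalize_normalized_factor r hr] at h1
      rwa [this]
  have hNat : Nat.card {f : Polynomial Fq // f.Monic ∧ Irreducible f ∧ f.natDegree = k}
      = S.card := by
    have hset : {f : Polynomial Fq | f.Monic ∧ Irreducible f ∧ f.natDegree = k} = ↑S := by
      ext f; simp [hmem f]
    calc Nat.card {f : Polynomial Fq // f.Monic ∧ Irreducible f ∧ f.natDegree = k}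
        = Set.ncard {f : Polynomial Fq | f.Monic ∧ Irreducible f ∧ f.natDegree = k} :=
          (Nat.card_coe_set_eq _).symm
      _ = S.card := by rw [hset, Set.ncard_coe_finset]
  rw [hNat]
  have hprod_dvd : (∏ f ∈ S, f) ∣ g := by
    have hle : S.val ≤ UniqueFactorizationMonoid.normalizedFactors g := by
      have h1 : S.val ≤ (UniqueFactorizationMonoid.normalizedFactors g).toFinset.val :=
        Finset.val_le_iff.mpr (Finset.filter_subset _ _)
      refine le_trans h1 ?_
      rw [Multiset.toFinset_val]
      exact Multiset.dedup_le _
    calc (∏ f ∈ S, f) = S.val.prod := by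
          rw [Finset.prod_eq_multiset_prod]; simp
      _ ∣ (UniqueFactorizationMonoid.normalizedFactors g).prod :=
          Multiset.prod_dvd_prod_of_le hle
      _ ∣ g := (UniqueFactorizationMonoid.prod_normalizedFactors hg0).dvd
  have hdegle : (∏ f ∈ S, f).natDegree ≤ q ^ k := by
    rw [← hgdeg]
    exact Polynomial.natDegree_le_of_dvd hprod_dvd hg0
  have hdegeq : (∏ f ∈ S, f).natDegree = k * S.card := by
    rw [Polynomial.natDegree_prod _ _ (fun f hf => ((hmem f).mp hf).1.ne_zero)]
    rw [Finset.sum_congr rfl (fun f hf => ((hmem f).mp hf).2.2)]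
    simp [mul_comm]
  omega


/-- For `N ≥ 1`, `∏_{k=1}^{N} (1 + q^{-k})^{π_q(k)} ≤ e·N`, where `π_q(k)`
is the number of monic irreducible polynomials of degree `k` in `F_q[t]`. -/
theorem prod_one_add_q_pow_le
    (Fq : Type) [Field Fq] [Fintype Fq] (N : ℕ) (hN : 1 ≤ N) :
    ∏ k ∈ Finset.Icc 1 N,
        (1 + (Fintype.card Fq : ℝ) ^ (-(k : ℤ))) ^
          (Nat.card {f : Polynomial Fq // f.Monic ∧ Irreducible f ∧ f.natDegree = k})
      ≤ Real.exp 1 * N := by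
  set q := Fintype.card Fq with hq
  have hq1 : (1 : ℝ) < q := by exact_mod_cast (Fintype.one_lt_card : 1 < q)
  have step1 : ∀ k ∈ Finset.Icc 1 N,
      (1 + (q : ℝ) ^ (-(k : ℤ))) ^
          (Nat.card {f : Polynomial Fq // f.Monic ∧ Irreducible f ∧ f.natDegree = k})
        ≤ Real.exp ((k : ℝ)⁻¹) := by
    intro k hk
    obtain ⟨hk1, -⟩ := Finset.mem_Icc.mp hk
    set m := Nat.card {f : Polynomial Fq // f.Monic ∧ Irreducible f ∧ f.natDegree = k}
    have hkey : k * m ≤ q ^ k := key_count Fq k hk1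
    have hqk : (0 : ℝ) < (q : ℝ) ^ k := by positivity
    have hkpos : (0 : ℝ) < k := by exact_mod_cast hk1
    have hmx : (m : ℝ) * (q : ℝ) ^ (-(k : ℤ)) ≤ (k : ℝ)⁻¹ := by
      rw [zpow_neg, zpow_natCast]
      rw [mul_inv_le_iff₀ hqk, inv_mul_eq_div, le_div_iff₀ hkpos]
      calc (m : ℝ) * k = ((k * m : ℕ) : ℝ) := by push_cast; ring
        _ ≤ ((q ^ k : ℕ) : ℝ) := by exact_mod_cast hkey
        _ = (q : ℝ) ^ k := by push_cast; ring
    have h1 : 1 + (q : ℝ) ^ (-(k : ℤ)) ≤ Real.exp ((q : ℝ) ^ (-(k : ℤ))) := by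
      rw [add_comm]; exact Real.add_one_le_exp _
    have h0 : (0 : ℝ) ≤ 1 + (q : ℝ) ^ (-(k : ℤ)) := by positivity
    calc (1 + (q : ℝ) ^ (-(k : ℤ))) ^ m
        ≤ (Real.exp ((q : ℝ) ^ (-(k : ℤ)))) ^ m := pow_le_pow_left₀ h0 h1 m
      _ = Real.exp ((m : ℝ) * (q : ℝ) ^ (-(k : ℤ))) := (Real.exp_nat_mul _ m).symm
      _ ≤ Real.exp ((k : ℝ)⁻¹) := Real.exp_le_exp.mpr hmx
  calc ∏ k ∈ Finset.Icc 1 N,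
        (1 + (q : ℝ) ^ (-(k : ℤ))) ^
          (Nat.card {f : Polynomial Fq // f.Monic ∧ Irreducible f ∧ f.natDegree = k})
      ≤ ∏ k ∈ Finset.Icc 1 N, Real.exp ((k : ℝ)⁻¹) :=
        Finset.prod_le_prod (fun k _ => by positivity) step1
    _ = Real.exp (∑ k ∈ Finset.Icc 1 N, (k : ℝ)⁻¹) := (Real.exp_sum _ _).symm
    _ ≤ Real.exp (1 + Real.log N) := by
        apply Real.exp_le_exp.mpr
        have := harmonic_le_one_add_log N
        rw [harmonic_eq_sum_Icc] at this
        push_cast at this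
        exact this
    _ = Real.exp 1 * N := by
        rw [Real.exp_add, Real.exp_log (by exact_mod_cast hN : (0:ℝ) < N)]
end
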